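/- Clone optimality preservation: let P1 and P2 be programs with weak constraints (costs), M1 an answer set of P1, and let remap(P2,P1) be the program consisting of a cloned copy clone^c(P2) of P2 together with rules clone^c(a) ← a and constraints ← clone^c(a), ∼a for each atom a of P1. Then M is an optimal answer set of remap(P2,P1) ∪ fix(P1,M1) if and only if M = M1 ∪ clone^c(M2) for some optimal answer set M2 of P2 ∪ fix(P1,M1). -/

import Mathlib

/-- A propositional normal rule: optional head (none = constraint),
positive body atoms, negative body atoms. -/
structure Rule (A : Type) where
  head : Option A
  pos : Set A
  neg : Set A

/-- The body of a rule is true in interpretation `M`. -/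
def Rule.bodyTrue {A : Type} (r : Rule A) (M : Set A) : Prop :=
  r.pos ⊆ M ∧ ∀ a ∈ r.neg, a ∉ M

/-- A rule is satisfied by `M`. -/
def Rule.sat {A : Type} (r : Rule A) (M : Set A) : Prop :=
  r.bodyTrue M → ∃ a, r.head = some a ∧ a ∈ M

/-- `M` is a model of program `P`. -/
def isModel {A : Type} (P : Set (Rule A)) (M : Set A) : Prop :=
  ∀ r ∈ P, r.sat M

/-- The (GL/FLP) reduct of `P` w.r.t. `M`: keep rules whose negative body is
disjoint from `M`, deleting the negative literals. -/
def reduct {A : Type} (P : Set (Rule A)) (M : Set A) : Set (Rule A) :=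
  {r' | ∃ r ∈ P, (∀ a ∈ r.neg, a ∉ M) ∧ r' = ⟨r.head, r.pos, ∅⟩}

/-- `M` is an answer set (stable model) of `P`: it is the least model of the reduct. -/
def isAnswerSet {A : Type} (P : Set (Rule A)) (M : Set A) : Prop :=
  isModel (reduct P M) M ∧ ∀ N, isModel (reduct P M) N → M ⊆ N

/-- Atoms occurring in a rule. -/
def Rule.atoms {A : Type} (r : Rule A) : Set A :=
  {a | r.head = some a} ∪ r.pos ∪ r.neg

/-- Atoms occurring in a program. -/
def progAtoms {A : Type} (P : Set (Rule A)) : Set A :=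
  ⋃ r ∈ P, r.atoms

/-- Head atoms of a program. -/
def progHeads {A : Type} (P : Set (Rule A)) : Set A :=
  {a | ∃ r ∈ P, r.head = some a}

/-- The fact `a ←`. -/
def factRule {A : Type} (a : A) : Rule A := ⟨some a, ∅, ∅⟩

/-- The constraint `← a`. -/
def constraintRule {A : Type} (a : A) : Rule A := ⟨none, {a}, ∅⟩

/-- `fix(U, M)`: facts for the atoms of `U` in `M`, constraints for the atoms
of `U` not in `M`. -/
def fixProg {A : Type} (U : Set A) (M : Set A) : Set (Rule A) :=
  {r | ∃ a ∈ M ∩ U, r = factRule a} ∪ {r | ∃ a ∈ U \ M, r = constraintRule a}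

/-- A ground weak constraint: body (positive and negative atoms), weight and level. -/
structure WConstraint (A : Type) where
  pos : Set A
  neg : Set A
  weight : ℤ
  level : ℤ

/-- A weak constraint is violated by `I` when its body is true in `I`. -/
def WConstraint.violated {A : Type} (c : WConstraint A) (I : Set A) : Prop :=
  c.pos ⊆ I ∧ ∀ a ∈ c.neg, a ∉ I

open Classical in
/-- Cost of interpretation `I` at level `l`: sum of the weights of the
violated weak constraints of level `l`. -/
noncomputable def costW {A : Type} (W : List (WConstraint A)) (I : Set A) (l : ℤ) : ℤ :=
  (W.map (fun c => if c.level = l ∧ c.violated I then c.weight else 0)).sum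

/-- `I1` is dominated by `I2`. -/
def DominatedW {A : Type} (W : List (WConstraint A)) (I1 I2 : Set A) : Prop :=
  ∃ l, costW W I2 l < costW W I1 l ∧ ∀ l' > l, costW W I2 l' = costW W I1 l'

/-- Optimal answer sets of a program with weak constraints `W`. -/
def isOptAnswerSet {A : Type} (P : Set (Rule A)) (W : List (WConstraint A)) (M : Set A) : Prop :=
  isAnswerSet P M ∧ ∀ M', isAnswerSet P M' → ¬ DominatedW W M M'

/-- Renaming of a rule along an atom map `σ`. -/
def Rule.map {A A' : Type} (σ : A → A') (r : Rule A) : Rule A' :=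
  ⟨r.head.map σ, σ '' r.pos, σ '' r.neg⟩

/-- Renaming of a program along an atom map `σ`. -/
def progMap {A A' : Type} (σ : A → A') (P : Set (Rule A)) : Set (Rule A') :=
  (Rule.map σ) '' P

/-- Renaming of a weak constraint along an atom map `σ`. -/
def WConstraint.map {A A' : Type} (σ : A → A') (c : WConstraint A) : WConstraint A' :=
  ⟨σ '' c.pos, σ '' c.neg, c.weight, c.level⟩

/-- `remap(P2,P1)` (rule part): the clone `clone^c(P2)` of the rules of `P2`
together with the rules `clone^c(a) ← a` and the constraints `← clone^c(a), ∼a`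
for every atom `a` of `P1`; the clone is given by `σ`. -/
def remapProg {A : Type} (σ : A → A) (R2 P1 : Set (Rule A)) : Set (Rule A) :=
  progMap σ R2 ∪
    {r | ∃ a ∈ progAtoms P1, r = ⟨some (σ a), {a}, ∅⟩} ∪
    {r | ∃ a ∈ progAtoms P1, r = ⟨none, {σ a}, {a}⟩}


/-! The clone atoms `σ a` are fresh, so an answer set `M` of the remapped program splits as
`M1 ∪ σ '' M2`, where `M2 = σ ⁻¹' M`. Models of the reducts transfer in both directions along
`N2 ↦ M1 ∪ σ '' N2` and `N ↦ σ ⁻¹' N`: the copy rules `σ a ← a` and the guards `← σ a, ∼a`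
translate exactly the facts and constraints of `fix(P1, M1)` to the clone. Hence the answer sets
correspond, and since the cloned weak constraints evaluate `M1 ∪ σ '' M2` as the original ones
evaluate `M2`, so do the optimal ones. -/

section AnswerSets

variable {A : Type}

theorem isModel_reduct_iff {P : Set (Rule A)} {M N : Set A} :
    isModel (reduct P M) N ↔
      ∀ r ∈ P, (∀ a ∈ r.neg, a ∉ M) → r.pos ⊆ N → ∃ a, r.head = some a ∧ a ∈ N := by
  constructor
  · intro h r hr hneg hpos
    exact h ⟨r.head, r.pos, ∅⟩ ⟨r, hr, hneg, rfl⟩ ⟨hpos, fun _ h => absurd h (Set.notMem_empty _)⟩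
  · rintro h _ ⟨r, hr, hneg, rfl⟩ ⟨hpos, -⟩
    exact h r hr hneg hpos

theorem mem_of_factRule_mem {P : Set (Rule A)} {M N : Set A} (hN : isModel (reduct P M) N)
    {a : A} (ha : factRule a ∈ P) : a ∈ N := by
  obtain ⟨b, hb, hbN⟩ := isModel_reduct_iff.1 hN _ ha (fun _ => False.elim) (Set.empty_subset N)
  rwa [Option.some_inj.1 hb]

theorem notMem_of_constraintRule_mem {P : Set (Rule A)} {M N : Set A}
    (hN : isModel (reduct P M) N) {a : A} (ha : constraintRule a ∈ P) : a ∉ N := fun haN => by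
  obtain ⟨_, hb, -⟩ :=
    isModel_reduct_iff.1 hN _ ha (fun _ => False.elim) (Set.singleton_subset_iff.2 haN)
  cases hb

theorem subset_of_isModel_reduct_of_fixProg_subset {P : Set (Rule A)} {U M0 M N : Set A}
    (hN : isModel (reduct P M) N) (hfix : fixProg U M0 ⊆ P) (hM0 : M0 ⊆ U) : M0 ⊆ N :=
  fun _ ha => mem_of_factRule_mem hN (hfix (Or.inl ⟨_, ⟨ha, hM0 ha⟩, rfl⟩))

theorem progHeads_subset_progAtoms (P : Set (Rule A)) : progHeads P ⊆ progAtoms P := by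
  rintro a ⟨r, hr, hh⟩
  exact Set.mem_biUnion hr (Or.inl (Or.inl hh))

/-- Supportedness: `M ∩ progHeads P` is again a model of the reduct. -/
theorem isAnswerSet.subset_progHeads {P : Set (Rule A)} {M : Set A} (h : isAnswerSet P M) :
    M ⊆ progHeads P := by
  have hmod : isModel (reduct P M) (M ∩ progHeads P) := by
    refine isModel_reduct_iff.2 fun r hr hneg hpos => ?_
    obtain ⟨a, ha, haM⟩ :=
      isModel_reduct_iff.1 h.1 r hr hneg (hpos.trans Set.inter_subset_left)
    exact ⟨a, ha, haM, r, hr, ha⟩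
  exact fun a ha => (h.2 _ hmod ha).2

theorem isAnswerSet.subset_progAtoms {P : Set (Rule A)} {M : Set A} (h : isAnswerSet P M) :
    M ⊆ progAtoms P :=
  h.subset_progHeads.trans (progHeads_subset_progAtoms P)

end AnswerSets

section Cost

variable {A B : Type}

theorem WConstraint.violated_map (σ : A → B) (c : WConstraint A) (I : Set B) :
    (c.map σ).violated I ↔ c.violated (σ ⁻¹' I) := by
  simp only [WConstraint.violated, WConstraint.map, Set.image_subset_iff, Set.forall_mem_image,
    Set.mem_preimage]

theorem costW_map (σ : A → B) (W : List (WConstraint A)) (I : Set B) (l : ℤ) :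
    costW (W.map (WConstraint.map σ)) I l = costW W (σ ⁻¹' I) l := by
  classical
  simp only [costW, List.map_map, Function.comp_def, WConstraint.violated_map]
  rfl

theorem dominatedW_map (σ : A → B) (W : List (WConstraint A)) (I J : Set B) :
    DominatedW (W.map (WConstraint.map σ)) I J ↔ DominatedW W (σ ⁻¹' I) (σ ⁻¹' J) := by
  simp only [DominatedW, costW_map]

theorem isOptAnswerSet_iff_of_isAnswerSet_iff {P : Set (Rule A)} {Q : Set (Rule B)}
    {W : List (WConstraint A)} {W' : List (WConstraint B)} (e : Set B → Set A)
    (hP : ∀ M, isAnswerSet P M ↔ ∃ N, isAnswerSet Q N ∧ M = e N)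
    (hdom : ∀ N N', DominatedW W (e N) (e N') ↔ DominatedW W' N N') (M : Set A) :
    isOptAnswerSet P W M ↔ ∃ N, isOptAnswerSet Q W' N ∧ M = e N := by
  constructor
  · rintro ⟨hM, hopt⟩
    obtain ⟨N, hN, rfl⟩ := (hP M).1 hM
    refine ⟨N, ⟨hN, fun N' hN' hdomN => ?_⟩, rfl⟩
    exact hopt _ ((hP _).2 ⟨N', hN', rfl⟩) ((hdom N N').2 hdomN)
  · rintro ⟨N, ⟨hN, hopt⟩, rfl⟩
    refine ⟨(hP _).2 ⟨N, hN, rfl⟩, fun M' hM' hdomM => ?_⟩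
    obtain ⟨N', hN', rfl⟩ := (hP M').1 hM'
    exact hopt N' hN' ((hdom N N').1 hdomM)

end Cost

section Remap

variable {A : Type} {σ : A → A} {P1 R2 : Set (Rule A)} {M1 : Set A}

theorem preimage_union_image_of_injective (hinj : Function.Injective σ) (hM1 : ∀ a, σ a ∉ M1)
    (N : Set A) : σ ⁻¹' (M1 ∪ σ '' N) = N := by
  ext a
  simp [hM1 a, hinj.mem_set_image]

theorem map_mem_remapProg {r : Rule A} (hr : r ∈ R2) : r.map σ ∈ remapProg σ R2 P1 :=
  Or.inl (Or.inl ⟨r, hr, rfl⟩)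

theorem copyRule_mem_remapProg {a : A} (ha : a ∈ progAtoms P1) :
    (⟨some (σ a), {a}, ∅⟩ : Rule A) ∈ remapProg σ R2 P1 :=
  Or.inl (Or.inr ⟨a, ha, rfl⟩)

theorem guardRule_mem_remapProg {a : A} (ha : a ∈ progAtoms P1) :
    (⟨none, {σ a}, {a}⟩ : Rule A) ∈ remapProg σ R2 P1 :=
  Or.inr ⟨a, ha, rfl⟩

theorem constraintRule_mem_fixProg {U M : Set A} {a : A} (hU : a ∈ U) (ha : a ∉ M) :
    constraintRule a ∈ fixProg U M :=
  Or.inr ⟨a, ⟨hU, ha⟩, rfl⟩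

theorem progHeads_remapProg_union_fixProg_subset :
    progHeads (remapProg σ R2 P1 ∪ fixProg (progAtoms P1) M1) ⊆ M1 ∪ Set.range σ := by
  rintro x ⟨r, (((⟨s, -, rfl⟩ | ⟨a, -, rfl⟩) | ⟨a, -, rfl⟩) | (⟨a, ha, rfl⟩ | ⟨a, -, rfl⟩)), hx⟩
  · obtain ⟨b, -, rfl⟩ := Option.map_eq_some_iff.1 hx
    exact Or.inr ⟨b, rfl⟩
  · cases Option.some_inj.1 hx
    exact Or.inr ⟨a, rfl⟩
  · cases hx
  · cases Option.some_inj.1 hx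
    exact Or.inl ha.1
  · cases hx

variable (hinj : Function.Injective σ) (hσ : ∀ a, σ a ∉ progAtoms P1)
  (hM1 : M1 ⊆ progAtoms P1)
include hinj hσ hM1

theorem isModel_reduct_remap_of_isModel_reduct {M2 N2 : Set A}
    (hN2 : isModel (reduct (R2 ∪ fixProg (progAtoms P1) M1) M2) N2) :
    isModel (reduct (remapProg σ R2 P1 ∪ fixProg (progAtoms P1) M1) (M1 ∪ σ '' M2))
      (M1 ∪ σ '' N2) := by
  have hσM1 : ∀ a, σ a ∉ M1 := fun a h => hσ a (hM1 h)
  have hU : ∀ a ∈ progAtoms P1, a ∈ M1 ∪ σ '' N2 → a ∈ M1 := by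
    rintro a ha (h | ⟨b, -, rfl⟩)
    exacts [h, absurd ha (hσ b)]
  rw [isModel_reduct_iff]
  rintro r (((⟨s, hs, rfl⟩ | ⟨a, ha, rfl⟩) | ⟨a, ha, rfl⟩) | (⟨a, ha, rfl⟩ | ⟨a, ha, rfl⟩))
    hneg hpos
  · have hpos' : s.pos ⊆ N2 := by
      rw [← preimage_union_image_of_injective hinj hσM1 N2]
      exact Set.image_subset_iff.1 hpos
    have hneg' : ∀ b ∈ s.neg, b ∉ M2 := fun b hb hbM =>
      hneg _ ⟨b, hb, rfl⟩ (Or.inr ⟨b, hbM, rfl⟩)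
    obtain ⟨b, hb, hbN⟩ := isModel_reduct_iff.1 hN2 s (Or.inl hs) hneg' hpos'
    exact ⟨σ b, by simp [Rule.map, hb], Or.inr ⟨b, hbN, rfl⟩⟩
  · have haN : a ∈ N2 := subset_of_isModel_reduct_of_fixProg_subset hN2
      Set.subset_union_right hM1 (hU a ha (hpos rfl))
    exact ⟨σ a, rfl, Or.inr ⟨a, haN, rfl⟩⟩
  · have haN : a ∈ N2 := by
      rw [← preimage_union_image_of_injective hinj hσM1 N2]
      exact hpos rfl
    have haM1 : a ∉ M1 := fun h => hneg a rfl (Or.inl h)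
    exact absurd haN
      (notMem_of_constraintRule_mem hN2 (Or.inr (constraintRule_mem_fixProg ha haM1)))
  · exact ⟨a, rfl, Or.inl ha.1⟩
  · exact absurd (hU a ha.1 (hpos rfl)) ha.2

theorem isModel_reduct_preimage_of_isModel_reduct_remap {M2 N : Set A}
    (hN : isModel (reduct (remapProg σ R2 P1 ∪ fixProg (progAtoms P1) M1) (M1 ∪ σ '' M2)) N) :
    isModel (reduct (R2 ∪ fixProg (progAtoms P1) M1) M2) (σ ⁻¹' N) := by
  have hσM1 : ∀ a, σ a ∉ M1 := fun a h => hσ a (hM1 h)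
  have hnoneg : ∀ a ∈ (∅ : Set A), a ∉ M1 ∪ σ '' M2 := fun _ h => absurd h (Set.notMem_empty _)
  rw [isModel_reduct_iff]
  rintro r (hr | (⟨a, ha, rfl⟩ | ⟨a, ha, rfl⟩)) hneg hpos
  · have hneg' : ∀ x ∈ (r.map σ).neg, x ∉ M1 ∪ σ '' M2 := by
      rintro _ ⟨b, hb, rfl⟩ hbM
      refine hneg b hb ?_
      rwa [← preimage_union_image_of_injective hinj hσM1 M2]
    obtain ⟨c, hc, hcN⟩ := isModel_reduct_iff.1 hN (r.map σ) (Or.inl (map_mem_remapProg hr))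
      hneg' (Set.image_subset_iff.2 hpos)
    obtain ⟨b, hb, rfl⟩ := Option.map_eq_some_iff.1 hc
    exact ⟨b, hb, hcN⟩
  · have haN : a ∈ N := subset_of_isModel_reduct_of_fixProg_subset hN
      Set.subset_union_right hM1 ha.1
    obtain ⟨b, hb, hbN⟩ := isModel_reduct_iff.1 hN _ (Or.inl (copyRule_mem_remapProg ha.2))
      hnoneg (Set.singleton_subset_iff.2 haN)
    cases Option.some_inj.1 hb
    exact ⟨a, rfl, hbN⟩
  · have hguard : ∀ x ∈ ({a} : Set A), x ∉ M1 ∪ σ '' M2 := by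
      rintro _ rfl (h | ⟨b, -, hb⟩)
      exacts [ha.2 h, hσ b (hb ▸ ha.1)]
    obtain ⟨_, hb, -⟩ := isModel_reduct_iff.1 hN _ (Or.inl (guardRule_mem_remapProg ha.1))
      hguard (Set.singleton_subset_iff.2 (hpos rfl))
    cases hb

theorem isAnswerSet_remapProg_union_fixProg_iff (M : Set A) :
    isAnswerSet (remapProg σ R2 P1 ∪ fixProg (progAtoms P1) M1) M ↔
      ∃ M2, isAnswerSet (R2 ∪ fixProg (progAtoms P1) M1) M2 ∧ M = M1 ∪ σ '' M2 := by
  have hpre := preimage_union_image_of_injective hinj fun a h => hσ a (hM1 h)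
  constructor
  · intro hM
    have hM1M : M1 ⊆ M :=
      subset_of_isModel_reduct_of_fixProg_subset hM.1 Set.subset_union_right hM1
    obtain ⟨M2, rfl⟩ : ∃ M2, M = M1 ∪ σ '' M2 := by
      refine ⟨σ ⁻¹' M, Set.Subset.antisymm (fun x hx => ?_)
        (Set.union_subset hM1M (Set.image_preimage_subset σ M))⟩
      rcases progHeads_remapProg_union_fixProg_subset (hM.subset_progHeads hx) with h | ⟨b, rfl⟩
      exacts [Or.inl h, Or.inr ⟨b, hx, rfl⟩]
    refine ⟨M2, ⟨?_, fun N2 hN2 => ?_⟩, rfl⟩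
    · simpa only [hpre] using
        isModel_reduct_preimage_of_isModel_reduct_remap hinj hσ hM1 hM.1
    · rw [← hpre M2, ← hpre N2]
      exact Set.preimage_mono
        (hM.2 _ (isModel_reduct_remap_of_isModel_reduct hinj hσ hM1 hN2))
  · rintro ⟨M2, hM2, rfl⟩
    refine ⟨isModel_reduct_remap_of_isModel_reduct hinj hσ hM1 hM2.1, fun N hN => ?_⟩
    exact Set.union_subset
      (subset_of_isModel_reduct_of_fixProg_subset hN Set.subset_union_right hM1)
      (Set.image_subset_iff.2
        (hM2.2 _ (isModel_reduct_preimage_of_isModel_reduct_remap hinj hσ hM1 hN)))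

end Remap

/-- Clone optimality preservation: for an injective clone map `σ` into fresh
atoms, `M` is an optimal answer set of `remap(P2,P1) ∪ fix(P1,M1)` (with the
cloned weak constraints) iff `M = M1 ∪ σ '' M2` for some optimal answer set
`M2` of `P2 ∪ fix(P1,M1)`. -/
theorem remap_optimal_answerSets {A : Type} (σ : A → A)
    (hinj : Function.Injective σ)
    (P1 R2 : Set (Rule A)) (W2 : List (WConstraint A))
    (hfresh : ∀ a : A,
      σ a ∉ progAtoms P1 ∪ progAtoms R2 ∪ (⋃ c ∈ W2, (c.pos ∪ c.neg)))
    (M1 : Set A) (hM1 : isAnswerSet P1 M1) (M : Set A) :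
    isOptAnswerSet (remapProg σ R2 P1 ∪ fixProg (progAtoms P1) M1)
        (W2.map (WConstraint.map σ)) M ↔
      ∃ M2 : Set A,
        isOptAnswerSet (R2 ∪ fixProg (progAtoms P1) M1) W2 M2 ∧
        M = M1 ∪ σ '' M2 := by
  have hM1U : M1 ⊆ progAtoms P1 := hM1.subset_progAtoms
  have hσ : ∀ a, σ a ∉ progAtoms P1 := fun a h => hfresh a (Or.inl (Or.inl h))
  have hpre := preimage_union_image_of_injective hinj fun a h => hσ a (hM1U h)
  refine isOptAnswerSet_iff_of_isAnswerSet_iff (fun M2 => M1 ∪ σ '' M2)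
    (isAnswerSet_remapProg_union_fixProg_iff hinj hσ hM1U) (fun N N' => ?_) M
  rw [dominatedW_map, hpre, hpre]
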